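/- The G-optimal value equals the dimension: the infimum over all designs π with M(π) invertible of g(π) = max_{1≤i≤k} φ_iᵀ M(π)⁻¹ φ_i is exactly d, and this infimum is attained by some design. -/

import Mathlib

open Matrix BigOperators

/-- A design is a probability vector over the `k` candidate points. -/
def IsDesign {k : ℕ} (π : Fin k → ℝ) : Prop :=
  (∀ i, 0 ≤ π i) ∧ ∑ i, π i = 1

/-- The information matrix `M(π) = ∑ i, π i • φ i φ iᵀ` of a design. -/
noncomputable def infoMatrix {d k : ℕ} (φ : Fin k → (Fin d → ℝ)) (π : Fin k → ℝ) :
    Matrix (Fin d) (Fin d) ℝ :=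
  ∑ i, π i • vecMulVec (φ i) (φ i)

/-!
Kiefer–Wolfowitz. For every design with invertible `M`, the `π`-average of the variances
`φ iᵀ M⁻¹ φ i` is `tr (M⁻¹ M) = d`, so their maximum is at least `d`. Conversely, let `π`
maximize `det M` over the compact simplex (a D-optimal design; `det M > 0` there because the
uniform design has positive definite `M`). Moving mass `t` onto the point `i` multiplies
`det M` by `(1 - t)^(d-1) (1 + t (c - 1))` with `c = φ iᵀ M⁻¹ φ i`, a factor whose derivative
at `t = 0` is `c - d`; maximality therefore forces `c ≤ d`.
-/
theorem exists_one_sub_lt_one_sub_pow_mul {c : ℝ} {d : ℕ} (hdc : (d : ℝ) < c) :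
    ∃ t : ℝ, 0 < t ∧ t < 1 ∧ 1 - t < (1 - t) ^ d * (1 - t + t * c) := by
  have hd : (0 : ℝ) ≤ d := d.cast_nonneg
  have hc : 0 < c := hd.trans_lt hdc
  -- Bernoulli bounds the left side below by a gain `t (c - d)` minus a loss `d (c - 1) t²`;
  -- this `t` keeps the loss under half the gain.
  set t := (c - d) / (2 * (d + 1) * c) with ht_def
  have ht : 2 * (d + 1) * c * t = c - d := by rw [ht_def]; field_simp
  have ht0 : 0 < t := div_pos (by linarith) (by positivity)
  have ht1 : t < 1 := (div_lt_one (by positivity)).2 (by nlinarith)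
  have bernoulli : 1 - d * t ≤ (1 - t) ^ d := by
    simpa [sub_eq_add_neg] using one_add_mul_le_pow (a := -t) (by linarith) d
  have hfac : 0 < 1 - t + t * c := by nlinarith
  have hsmall : d * t * (c - 1) < c - d := by nlinarith
  refine ⟨t, ht0, ht1, ?_⟩
  calc 1 - t < (1 - d * t) * (1 - t + t * c) := by nlinarith [mul_pos ht0 (sub_pos.2 hsmall)]
    _ ≤ (1 - t) ^ d * (1 - t + t * c) := mul_le_mul_of_nonneg_right bernoulli hfac.le

theorem det_add_vecMulVec {n K : Type*} [Fintype n] [DecidableEq n] [Field K]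
    {M : Matrix n n K} (hM : IsUnit M.det) (u v : n → K) :
    (M + vecMulVec u v).det = M.det * (1 + v ⬝ᵥ M⁻¹ *ᵥ u) := by
  rw [vecMulVec_eq Unit, det_add_replicateCol_mul_replicateRow hM, Matrix.mul_assoc,
    ← replicateCol_mulVec, det_unique (n := Unit), Matrix.add_apply, one_apply_eq,
    replicateRow_mul_replicateCol_apply]

theorem mul_det_smul_add_smul_vecMulVec {n K : Type*} [Fintype n] [DecidableEq n] [Field K]
    {M : Matrix n n K} (hM : IsUnit M.det) {s : K} (hs : s ≠ 0) (t : K) (u v : n → K) :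
    s * (s • M + t • vecMulVec u v).det
      = s ^ Fintype.card n * (s + t * (v ⬝ᵥ M⁻¹ *ᵥ u)) * M.det := by
  have hsplit : s • M + t • vecMulVec u v = s • (M + vecMulVec ((t / s) • u) v) := by
    rw [smul_vecMulVec, smul_add, smul_smul, mul_div_cancel₀ t hs]
  rw [hsplit, det_smul, det_add_vecMulVec hM, mulVec_smul, dotProduct_smul, smul_eq_mul]
  field_simp

theorem trace_mul_vecMulVec_self {n R : Type*} [Fintype n] [CommRing R]
    (A : Matrix n n R) (u : n → R) : (A * vecMulVec u u).trace = u ⬝ᵥ A *ᵥ u := by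
  rw [mul_vecMulVec, trace_vecMulVec, dotProduct_comm]

section InfoMatrix

variable {d k : ℕ} (φ : Fin k → (Fin d → ℝ))

theorem isDesign_iff_mem_stdSimplex {π : Fin k → ℝ} : IsDesign π ↔ π ∈ stdSimplex ℝ (Fin k) :=
  Iff.rfl

theorem infoMatrix_smul_add_smul (a b : ℝ) (π π' : Fin k → ℝ) :
    infoMatrix φ (a • π + b • π') = a • infoMatrix φ π + b • infoMatrix φ π' := by
  simp only [infoMatrix, Pi.add_apply, Pi.smul_apply, smul_eq_mul, add_smul, mul_smul,
    Finset.sum_add_distrib, Finset.smul_sum]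

theorem infoMatrix_single (i : Fin k) :
    infoMatrix φ (Pi.single i 1) = vecMulVec (φ i) (φ i) := by
  simp [infoMatrix, Pi.single_apply]

theorem continuous_det_infoMatrix : Continuous fun π => (infoMatrix φ π).det :=
  (continuous_finsetSum _ fun i _ => (continuous_apply i).smul continuous_const).matrix_det

theorem isHermitian_infoMatrix (π : Fin k → ℝ) : (infoMatrix φ π).IsHermitian := by
  simp [IsHermitian, infoMatrix, transpose_sum]

theorem dotProduct_infoMatrix_mulVec (π : Fin k → ℝ) (x : Fin d → ℝ) :
    x ⬝ᵥ infoMatrix φ π *ᵥ x = ∑ i, π i * (φ i ⬝ᵥ x) ^ 2 := by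
  simp only [infoMatrix, sum_mulVec, dotProduct_sum, smul_mulVec, vecMulVec_mulVec,
    dotProduct_smul, op_smul_eq_mul, smul_eq_mul]
  exact Finset.sum_congr rfl fun i _ => by rw [dotProduct_comm x]; ring

theorem trace_mul_infoMatrix (A : Matrix (Fin d) (Fin d) ℝ) (π : Fin k → ℝ) :
    (A * infoMatrix φ π).trace = ∑ i, π i * (φ i ⬝ᵥ A *ᵥ φ i) := by
  simp [infoMatrix, Matrix.mul_sum, trace_sum, trace_mul_vecMulVec_self]

theorem posDef_infoMatrix (hspan : Submodule.span ℝ (Set.range φ) = ⊤) {π : Fin k → ℝ}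
    (hπ : ∀ i, 0 < π i) : (infoMatrix φ π).PosDef := by
  refine PosDef.of_dotProduct_mulVec_pos (isHermitian_infoMatrix φ π) fun x hx => ?_
  rw [star_trivial, dotProduct_infoMatrix_mulVec]
  obtain ⟨i, hi⟩ : ∃ i, φ i ⬝ᵥ x ≠ 0 := by
    by_contra! h
    obtain ⟨c, hc⟩ := (Submodule.mem_span_range_iff_exists_fun ℝ).1
      (hspan ▸ Submodule.mem_top : x ∈ Submodule.span ℝ (Set.range φ))
    apply hx
    rw [← dotProduct_self_eq_zero]
    nth_rw 1 [← hc]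
    simp [sum_dotProduct, smul_dotProduct, h]
  exact Finset.sum_pos' (fun j _ => mul_nonneg (hπ j).le (sq_nonneg _))
    ⟨i, Finset.mem_univ i, mul_pos (hπ i) (by positivity)⟩

theorem sum_mul_dotProduct_inv_infoMatrix_mulVec {π : Fin k → ℝ}
    (hu : IsUnit (infoMatrix φ π)) :
    ∑ i, π i * (φ i ⬝ᵥ (infoMatrix φ π)⁻¹ *ᵥ φ i) = d := by
  rw [← trace_mul_infoMatrix, nonsing_inv_mul _ ((isUnit_iff_isUnit_det _).1 hu), trace_one,
    Fintype.card_fin]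

theorem natCast_le_iSup_dotProduct_inv_infoMatrix_mulVec {π : Fin k → ℝ} (hπ : IsDesign π)
    (hu : IsUnit (infoMatrix φ π)) : (d : ℝ) ≤ ⨆ i, φ i ⬝ᵥ (infoMatrix φ π)⁻¹ *ᵥ φ i := by
  set g := fun i => φ i ⬝ᵥ (infoMatrix φ π)⁻¹ *ᵥ φ i
  calc (d : ℝ) = ∑ i, π i * g i := (sum_mul_dotProduct_inv_infoMatrix_mulVec φ hu).symm
    _ ≤ ∑ i, π i * ⨆ j, g j := Finset.sum_le_sum fun i _ =>
        mul_le_mul_of_nonneg_left (le_ciSup (Set.finite_range g).bddAbove i) (hπ.1 i)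
    _ = ⨆ j, g j := by rw [← Finset.sum_mul, hπ.2, one_mul]

theorem dotProduct_inv_infoMatrix_mulVec_le_of_isMaxOn {π : Fin k → ℝ}
    (hπ : π ∈ stdSimplex ℝ (Fin k))
    (hmax : IsMaxOn (fun π => (infoMatrix φ π).det) (stdSimplex ℝ (Fin k)) π)
    (hdet : 0 < (infoMatrix φ π).det) (i : Fin k) :
    φ i ⬝ᵥ (infoMatrix φ π)⁻¹ *ᵥ φ i ≤ d := by
  by_contra! hlt
  obtain ⟨t, ht0, ht1, hgain⟩ := exists_one_sub_lt_one_sub_pow_mul hlt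
  have hmix : (1 - t) • π + t • Pi.single i 1 ∈ stdSimplex ℝ (Fin k) :=
    convex_stdSimplex ℝ (Fin k) hπ (single_mem_stdSimplex ℝ i) (by linarith) ht0.le (by ring)
  have hdet_mix := mul_det_smul_add_smul_vecMulVec hdet.ne'.isUnit (sub_ne_zero.2 ht1.ne') t
    (φ i) (φ i)
  rw [Fintype.card_fin, ← infoMatrix_single, ← infoMatrix_smul_add_smul] at hdet_mix
  have hle := mul_le_mul_of_nonneg_left (hmax hmix) (sub_nonneg.2 ht1.le)
  rw [hdet_mix] at hle
  exact (mul_lt_mul_of_pos_right hgain hdet).not_ge hle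

end InfoMatrix

theorem G_optimal_value_eq_dim_general {d k : ℕ} (hk : 0 < k)
    (φ : Fin k → (Fin d → ℝ))
    (hspan : Submodule.span ℝ (Set.range φ) = ⊤) :
    IsLeast {x : ℝ | ∃ π, IsDesign π ∧ IsUnit (infoMatrix φ π) ∧
      (⨆ i, φ i ⬝ᵥ (infoMatrix φ π)⁻¹ *ᵥ φ i) = x} (d : ℝ) := by
  have : Nonempty (Fin k) := ⟨⟨0, hk⟩⟩
  let uniform := (stdSimplex.barycenter : stdSimplex ℝ (Fin k))
  obtain ⟨π, hπ, hmax⟩ := (isCompact_stdSimplex ℝ (Fin k)).exists_isMaxOn ⟨_, uniform.2⟩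
    (continuous_det_infoMatrix φ).continuousOn
  have hdesign : IsDesign π := isDesign_iff_mem_stdSimplex.2 hπ
  have hdet : 0 < (infoMatrix φ π).det :=
    (posDef_infoMatrix φ hspan fun _ => by simpa [uniform] using hk).det_pos.trans_le
      (hmax uniform.2)
  have hu : IsUnit (infoMatrix φ π) := (isUnit_iff_isUnit_det _).2 hdet.ne'.isUnit
  refine ⟨⟨π, hdesign, hu,
    le_antisymm ?_ (natCast_le_iSup_dotProduct_inv_infoMatrix_mulVec φ hdesign hu)⟩, ?_⟩
  · exact ciSup_le (dotProduct_inv_infoMatrix_mulVec_le_of_isMaxOn φ hπ hmax hdet)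
  · rintro _ ⟨π, hπ, hu, rfl⟩
    exact natCast_le_iSup_dotProduct_inv_infoMatrix_mulVec φ hπ hu

theorem G_optimal_value_eq_dim {d k : ℕ} (hd : 0 < d) (hk : 0 < k)
    (φ : Fin k → (Fin d → ℝ))
    (hspan : Submodule.span ℝ (Set.range φ) = ⊤) :
    IsLeast {x : ℝ | ∃ π, IsDesign π ∧ IsUnit (infoMatrix φ π) ∧
      (⨆ i, φ i ⬝ᵥ (infoMatrix φ π)⁻¹ *ᵥ φ i) = x} (d : ℝ) :=
  G_optimal_value_eq_dim_general hk φ hspan
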